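/- (Per-episode concentration of the estimated Lipschitz constant.) Fix one episode m in which each arm i is pulled n_m(i) ≥ τ times with mutually independent Bernoulli(μ_m(i)) rewards. Then for every ε > 0, Pr[ |L_m − L̂_m| ≥ ε ] ≤ Pr[ ∃ i ∈ [K] : |μ̂_m(i) − μ_m(i)| ≥ ε·Δ_x / 2 ] ≤ 2K · exp( −Δ_x² ε² τ / 2 ). -/

import Mathlib

open Real Finset MeasureTheory ProbabilityTheory

noncomputable section

/-- The Lipschitz structure `Φ(L)` for embedding `x`. -/
def Phi {K D : ℕ} (x : Fin K → EuclideanSpace ℝ (Fin D)) (L : ℝ) : Set (Fin K → ℝ) :=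
  {μ | (∀ i, μ i ∈ Set.Icc (0:ℝ) 1) ∧ ∀ i j, |μ i - μ j| ≤ L * dist (x i) (x j)}

/-- `Δ_x`: the minimal distance between two distinct embedded arms. -/
def Δemb {K D : ℕ} (x : Fin K → EuclideanSpace ℝ (Fin D)) : ℝ :=
  sInf {r : ℝ | ∃ i j : Fin K, i ≠ j ∧ r = dist (x i) (x j)}

/-- The tightest Lipschitz constant of a mean vector `a` w.r.t. embedding `x`:
`max_{i ≠ j} |a(i) − a(j)| / d(i,j)`. -/
def lipConst {K D : ℕ} (x : Fin K → EuclideanSpace ℝ (Fin D)) (a : Fin K → ℝ) : ℝ :=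
  sSup {r : ℝ | ∃ i j : Fin K, i ≠ j ∧ r = |a i - a j| / dist (x i) (x j)}

/-- The `k`-th largest value among `f 1, …, f M`. -/
def kthLargest {M : ℕ} (f : Fin M → ℝ) (k : ℕ) : ℝ :=
  sSup {t : ℝ | k ≤ (Finset.univ.filter (fun m => t ≤ f m)).card}

/-- Empirical mean of arm `i` in episode `m`, given rewards `r` indexed by
episode/arm/pull-index. -/
def empMean {M K : ℕ} {Ω : Type*} {n : Fin M → Fin K → ℕ}
    (r : (Σ m : Fin M, Σ i : Fin K, Fin (n m i)) → Ω → ℝ) (m : Fin M) (i : Fin K)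
    (ω : Ω) : ℝ :=
  (∑ s : Fin (n m i), r ⟨m, i, s⟩ ω) / (n m i)

end

/-- Empirical mean for a single episode. -/
noncomputable def empMean1 {K : ℕ} {Ω : Type*} {n : Fin K → ℕ}
    (r : (Σ i : Fin K, Fin (n i)) → Ω → ℝ) (i : Fin K) (ω : Ω) : ℝ :=
  (∑ s : Fin (n i), r ⟨i, s⟩ ω) / (n i)


/-! If every empirical mean is within `εΔ_x/2` of its true mean, then every difference quotient
`|a i - a j| / d(i,j)` moves by less than `ε`, since `d(i,j) ≥ Δ_x`; hence so does their maximum,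
the Lipschitz constant. Each empirical mean averages at least `τ` independent `[0,1]`-valued
rewards, so Hoeffding's inequality bounds each deviation probability by `2 exp(-2τ(εΔ_x/2)²)`,
and a union bound over the `K` arms gives the second inequality. -/

open scoped NNReal

section LipschitzConstant

variable {K D : ℕ} (x : Fin K → EuclideanSpace ℝ (Fin D))

lemma finite_setOf_exists_ne_eq {ι : Type*} [Finite ι] (f : ι → ι → ℝ) :
    {r : ℝ | ∃ i j, i ≠ j ∧ r = f i j}.Finite :=
  (Set.finite_range (Function.uncurry f)).subset fun _ ⟨i, j, _, hr⟩ ↦ ⟨(i, j), hr.symm⟩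

lemma Δemb_le {i j : Fin K} (hij : i ≠ j) : Δemb x ≤ dist (x i) (x j) :=
  csInf_le ⟨0, fun _ ⟨_, _, _, hr⟩ ↦ hr ▸ dist_nonneg⟩ ⟨i, j, hij, rfl⟩

lemma Δemb_pos (hK : 2 ≤ K) (hx : Function.Injective x) : 0 < Δemb x := by
  have : Nontrivial (Fin K) := Fin.nontrivial_iff_two_le.mpr hK
  obtain ⟨i, j, hij⟩ := exists_pair_ne (Fin K)
  have hne : {r : ℝ | ∃ i j : Fin K, i ≠ j ∧ r = dist (x i) (x j)}.Nonempty := ⟨_, i, j, hij, rfl⟩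
  obtain ⟨i', j', hij', hΔ⟩ := hne.csInf_mem (finite_setOf_exists_ne_eq _)
  rw [Δemb, hΔ]
  exact dist_pos.mpr (hx.ne hij')

lemma lipConst_le_add (hK : 2 ≤ K) (hx : Function.Injective x) {a b : Fin K → ℝ} {δ : ℝ}
    (hab : ∀ i, |a i - b i| ≤ δ) : lipConst x a ≤ lipConst x b + 2 * δ / Δemb x := by
  have : Nontrivial (Fin K) := Fin.nontrivial_iff_two_le.mpr hK
  obtain ⟨i₀, j₀, hij₀⟩ := exists_pair_ne (Fin K)
  have hδ : 0 ≤ δ := (abs_nonneg _).trans (hab i₀)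
  refine csSup_le ⟨_, i₀, j₀, hij₀, rfl⟩ ?_
  rintro _ ⟨i, j, hij, rfl⟩
  have hdist : 0 < dist (x i) (x j) := (Δemb_pos x hK hx).trans_le (Δemb_le x hij)
  have htri : |a i - a j| ≤ |b i - b j| + 2 * δ := by
    have := abs_sub_le (a i) (b i) (a j)
    have := abs_sub_le (b i) (b j) (a j)
    have := hab j
    rw [abs_sub_comm] at this
    linarith [hab i]
  calc |a i - a j| / dist (x i) (x j)
      ≤ |b i - b j| / dist (x i) (x j) + 2 * δ / dist (x i) (x j) := by
        rw [← add_div]; gcongr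
    _ ≤ lipConst x b + 2 * δ / Δemb x := by
        gcongr
        · exact le_csSup (finite_setOf_exists_ne_eq _).bddAbove ⟨i, j, hij, rfl⟩
        · exact Δemb_pos x hK hx
        · exact Δemb_le x hij

lemma abs_lipConst_sub_lt (hK : 2 ≤ K) (hx : Function.Injective x) {a b : Fin K → ℝ} {ε : ℝ}
    (hab : ∀ i, |a i - b i| < ε * Δemb x / 2) : |lipConst x a - lipConst x b| < ε := by
  have : Nonempty (Fin K) := ⟨⟨0, by omega⟩⟩
  obtain ⟨i₀, hi₀⟩ := Finite.exists_max fun i ↦ |a i - b i|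
  have hΔ := Δemb_pos x hK hx
  have hlt : 2 * |a i₀ - b i₀| / Δemb x < ε := by
    rw [div_lt_iff₀ hΔ]; linarith [hab i₀]
  have hab' := lipConst_le_add x hK hx hi₀
  have hba := lipConst_le_add x hK hx (a := b) (b := a) fun i ↦ abs_sub_comm (a i) (b i) ▸ hi₀ i
  rw [abs_sub_lt_iff]
  constructor <;> linarith

end LipschitzConstant

section Hoeffding

variable {Ω : Type*} [MeasurableSpace Ω] {P : Measure Ω}

lemma measureReal_le_abs_sum_le_of_iIndepFun {ι : Type*} {X : ι → Ω → ℝ}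
    (h_indep : iIndepFun X P) {c : ι → ℝ≥0} {s : Finset ι}
    (h_subG : ∀ i ∈ s, HasSubgaussianMGF (X i) (c i) P) {t : ℝ} (ht : 0 ≤ t) :
    P.real {ω | t ≤ |∑ i ∈ s, X i ω|} ≤ 2 * exp (-t ^ 2 / (2 * ∑ i ∈ s, c i)) := by
  have := h_indep.isProbabilityMeasure
  have h_upper := HasSubgaussianMGF.measure_sum_ge_le_of_iIndepFun h_indep h_subG ht
  have h_lower := HasSubgaussianMGF.measure_sum_ge_le_of_iIndepFun
    (h_indep.comp (fun _ ↦ Neg.neg) fun _ ↦ measurable_neg) (fun i hi ↦ (h_subG i hi).neg) ht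
  have hsplit : {ω | t ≤ |∑ i ∈ s, X i ω|}
      ⊆ {ω | t ≤ ∑ i ∈ s, X i ω} ∪ {ω | t ≤ ∑ i ∈ s, (Neg.neg ∘ X i) ω} := by
    intro ω hω
    simpa [Finset.sum_neg_distrib] using le_abs.mp hω
  calc P.real {ω | t ≤ |∑ i ∈ s, X i ω|}
      ≤ P.real {ω | t ≤ ∑ i ∈ s, X i ω} + P.real {ω | t ≤ ∑ i ∈ s, (Neg.neg ∘ X i) ω} :=
        (measureReal_mono hsplit).trans (measureReal_union_le _ _)
    _ ≤ 2 * exp (-t ^ 2 / (2 * ∑ i ∈ s, c i)) := by linarith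

lemma integral_eq_of_eq_zero_or_one {X : Ω → ℝ} (hX : Measurable X)
    (h01 : ∀ ω, X ω = 0 ∨ X ω = 1) {p : ℝ} (hp : 0 ≤ p)
    (hP : P {ω | X ω = 1} = ENNReal.ofReal p) : P[X] = p := by
  have hind : ∀ ω, X ω = {ω | X ω = 1}.indicator 1 ω := fun ω ↦ by
    rcases h01 ω with h | h <;> simp [h]
  calc ∫ ω, X ω ∂P = ∫ ω, {ω | X ω = 1}.indicator 1 ω ∂P := integral_congr_ae (ae_of_all P hind)
    _ = P.real {ω | X ω = 1} := integral_indicator_one (hX (measurableSet_singleton 1))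
    _ = p := by rw [measureReal_def, hP, ENNReal.toReal_ofReal hp]

lemma measureReal_le_abs_empiricalMean_sub_le [IsProbabilityMeasure P] {ι : Type*} [Fintype ι]
    {X : ι → Ω → ℝ} (h_indep : iIndepFun X P) (hmeas : ∀ s, Measurable (X s))
    (hX : ∀ s ω, X s ω ∈ Set.Icc 0 1) {p : ℝ} (hp : ∀ s, P[X s] = p) {c : ℝ} (hc : 0 ≤ c) :
    P.real {ω | c ≤ |(∑ s, X s ω) / Fintype.card ι - p|}
      ≤ 2 * exp (-2 * Fintype.card ι * c ^ 2) := by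
  set N : ℝ := (Fintype.card ι : ℝ)
  have hN₀ : 0 ≤ N := Nat.cast_nonneg _
  rcases hN₀.eq_or_lt with hN | hN
  -- with no samples the empirical mean is the junk value `0 / 0 = 0`, but the bound is `2`
  · exact measureReal_le_one.trans (by rw [← hN]; norm_num)
  have hsubG : ∀ s, HasSubgaussianMGF (fun ω ↦ X s ω - p) ((‖(1 : ℝ) - 0‖₊ / 2) ^ 2) P := by
    intro s
    have := hasSubgaussianMGF_of_mem_Icc (hmeas s).aemeasurable (ae_of_all P (hX s))
    rwa [hp s] at this
  have hevent : {ω | c ≤ |(∑ s, X s ω) / N - p|} = {ω | N * c ≤ |∑ s, (X s ω - p)|} := by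
    ext ω
    rw [Set.mem_ofPred_eq, Set.mem_ofPred_eq, Finset.sum_sub_distrib, Finset.sum_const,
      Finset.card_univ, nsmul_eq_mul, ← mul_le_mul_iff_of_pos_left hN, ← abs_of_pos hN, ← abs_mul,
      abs_of_pos hN, mul_sub, mul_div_cancel₀ _ hN.ne']
  have h_indep' : iIndepFun (fun s ω ↦ X s ω - p) P :=
    h_indep.comp (fun _ y ↦ y - p) fun _ ↦ measurable_id.sub_const p
  have hHoeffding := measureReal_le_abs_sum_le_of_iIndepFun h_indep' (s := Finset.univ)
    (fun s _ ↦ hsubG s) (mul_nonneg hN.le hc)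
  rw [hevent]
  convert hHoeffding using 3
  simp only [neg_mul, sub_zero, nnnorm_one, one_div, inv_pow, sum_const, card_univ, nsmul_eq_mul,
    NNReal.coe_mul, NNReal.coe_natCast, NNReal.coe_inv, NNReal.coe_pow, NNReal.coe_ofNat, N]
  field_simp

lemma measureReal_le_abs_empMean1_sub_le [IsProbabilityMeasure P] {K : ℕ} {μm : Fin K → ℝ}
    (hμm : ∀ i, 0 ≤ μm i) {n : Fin K → ℕ} {r : (Σ i : Fin K, Fin (n i)) → Ω → ℝ}
    (hmeas : ∀ idx, Measurable (r idx)) (h01 : ∀ idx ω, r idx ω = 0 ∨ r idx ω = 1)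
    (hmean : ∀ idx, P {ω | r idx ω = 1} = ENNReal.ofReal (μm idx.1)) (hindep : iIndepFun r P)
    (i : Fin K) {c : ℝ} (hc : 0 ≤ c) :
    P.real {ω | c ≤ |empMean1 r i ω - μm i|} ≤ 2 * exp (-2 * n i * c ^ 2) := by
  have hunit : ∀ s ω, r ⟨i, s⟩ ω ∈ Set.Icc 0 1 := fun s ω ↦ by
    rcases h01 ⟨i, s⟩ ω with h | h <;> simp [h]
  simpa only [Fintype.card_fin, empMean1] using measureReal_le_abs_empiricalMean_sub_le
    (hindep.precomp sigma_mk_injective) (fun s ↦ hmeas ⟨i, s⟩) hunit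
    (fun s ↦ integral_eq_of_eq_zero_or_one (hmeas _) (h01 _) (hμm i) (hmean ⟨i, s⟩)) hc

end Hoeffding

theorem stmt7_general {K D : ℕ} (hK : 2 ≤ K)
    (x : Fin K → EuclideanSpace ℝ (Fin D))
    (hx : Function.Injective x)
    (μm : Fin K → ℝ) (hμm : ∀ i, μm i ∈ Set.Icc (0:ℝ) 1)
    (τ : ℝ)
    (n : Fin K → ℕ) (hn : ∀ i, τ ≤ (n i : ℝ))
    {Ω : Type*} [MeasurableSpace Ω] (P : Measure Ω) [IsProbabilityMeasure P]
    (r : (Σ i : Fin K, Fin (n i)) → Ω → ℝ)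
    (hmeas : ∀ idx, Measurable (r idx))
    (h01 : ∀ idx ω, r idx ω = 0 ∨ r idx ω = 1)
    (hmean : ∀ idx, P {ω | r idx ω = 1} = ENNReal.ofReal (μm idx.1))
    (hindep : ProbabilityTheory.iIndepFun r P)
    (ε : ℝ) (hε : 0 < ε) :
    (P {ω | ε ≤ |lipConst x μm - lipConst x (fun i => empMean1 r i ω)|}).toReal
      ≤ (P {ω | ∃ i, ε * Δemb x / 2 ≤ |empMean1 r i ω - μm i|}).toReal
    ∧ (P {ω | ∃ i, ε * Δemb x / 2 ≤ |empMean1 r i ω - μm i|}).toReal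
      ≤ 2 * K * Real.exp (-(Δemb x) ^ 2 * ε ^ 2 * τ / 2) := by
  set c := ε * Δemb x / 2
  have hdev : ∀ i, P.real {ω | c ≤ |empMean1 r i ω - μm i|}
      ≤ 2 * exp (-(Δemb x) ^ 2 * ε ^ 2 * τ / 2) := by
    intro i
    refine (measureReal_le_abs_empMean1_sub_le (fun i ↦ (hμm i).1) hmeas h01 hmean hindep i
      (by have := Δemb_pos x hK hx; positivity)).trans ?_
    rw [show -(Δemb x) ^ 2 * ε ^ 2 * τ / 2 = -2 * τ * c ^ 2 by simp only [c]; ring]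
    gcongr 2 * exp ?_
    nlinarith [hn i, sq_nonneg c]
  constructor
  · refine measureReal_mono fun ω hω ↦ ?_
    by_contra hfar
    simp only [Set.mem_ofPred_eq, not_exists, not_le] at hfar
    exact (abs_lipConst_sub_lt x hK hx fun i ↦ abs_sub_comm (μm i) _ ▸ hfar i).not_ge hω
  · calc P.real {ω | ∃ i, c ≤ |empMean1 r i ω - μm i|}
        ≤ ∑ i, P.real {ω | c ≤ |empMean1 r i ω - μm i|} := by
          rw [Set.ofPred_exists]; exact measureReal_iUnion_fintype_le _
      _ ≤ ∑ _i : Fin K, 2 * exp (-(Δemb x) ^ 2 * ε ^ 2 * τ / 2) :=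
          Finset.sum_le_sum fun i _ ↦ hdev i
      _ = 2 * K * exp (-(Δemb x) ^ 2 * ε ^ 2 * τ / 2) := by
          simp only [neg_mul, sum_const, card_univ, Fintype.card_fin, nsmul_eq_mul]; ring

theorem stmt7 {K D : ℕ} (hK : 2 ≤ K)
    (x : Fin K → EuclideanSpace ℝ (Fin D))
    (hx : Function.Injective x)
    (hcube : ∀ i t, x i t ∈ Set.Icc (0:ℝ) 1)
    (μm : Fin K → ℝ) (hμm : ∀ i, μm i ∈ Set.Icc (0:ℝ) 1)
    (τ : ℝ) (hτ0 : 0 < τ)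
    (n : Fin K → ℕ) (hn : ∀ i, τ ≤ (n i : ℝ))
    {Ω : Type*} [MeasurableSpace Ω] (P : Measure Ω) [IsProbabilityMeasure P]
    (r : (Σ i : Fin K, Fin (n i)) → Ω → ℝ)
    (hmeas : ∀ idx, Measurable (r idx))
    (h01 : ∀ idx ω, r idx ω = 0 ∨ r idx ω = 1)
    (hmean : ∀ idx, P {ω | r idx ω = 1} = ENNReal.ofReal (μm idx.1))
    (hindep : ProbabilityTheory.iIndepFun r P)
    (ε : ℝ) (hε : 0 < ε) :
    (P {ω | ε ≤ |lipConst x μm - lipConst x (fun i => empMean1 r i ω)|}).toReal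
      ≤ (P {ω | ∃ i, ε * Δemb x / 2 ≤ |empMean1 r i ω - μm i|}).toReal
    ∧ (P {ω | ∃ i, ε * Δemb x / 2 ≤ |empMean1 r i ω - μm i|}).toReal
      ≤ 2 * K * Real.exp (-(Δemb x) ^ 2 * ε ^ 2 * τ / 2) :=
  stmt7_general hK x hx μm hμm τ n hn P r hmeas h01 hmean hindep ε hε
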